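/- Let A ∈ ℝ^{n×n}, B ∈ ℝ^{n×m}, C ∈ ℝ^{l×n}, D ∈ ℝ^{l×m}, E ∈ ℝ^{n×q}, S ∈ ℝ^{q×q}, S₀ ∈ ℝ^{n₀×n₀}, F₀ ∈ ℝ^{l×n₀}. Suppose X₁, U₁ satisfy X₁S = AX₁ + BU₁ + E and 0 = CX₁ + DU₁, and X₂, U₂ satisfy X₂S₀ = AX₂ + BU₂ and 0 = CX₂ + DU₂ − F₀. Let K₁ be such that A + BK₁ is Hurwitz, K₂ = U₁ − K₁X₁, K₃ = U₂ − K₁X₂, and let L ∈ ℝ^{q×n} be such that S + LE is Hurwitz. Let x, d, r, ζ be differentiable with d' = S d, r' = S₀ r, x' = A x + B u + E d, ζ' = (S + LE)ζ + (LA − SL − LEL)x + LBu, and u = K₁x + K₂(ζ − Lx) + K₃η, where η : [0,∞) → ℝ^{n₀} satisfies ‖η(t) − r(t)‖ ≤ c·e^{−λt} for some constants c > 0, λ > 0. Then e(t) = C x(t) + D u(t) − F₀ r(t) → 0 as t → ∞ for every initial condition. -/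

import Mathlib

open Matrix Filter

/-- A real square matrix is Hurwitz if every eigenvalue of it, regarded as a
complex matrix, has strictly negative real part. -/
def IsHurwitz {ι : Type*} [Fintype ι] [DecidableEq ι] (M : Matrix ι ι ℝ) : Prop :=
  ∀ μ ∈ spectrum ℂ (M.map Complex.ofReal), μ.re < 0

/-!
The observer error `ε = ζ - L x - d` obeys `ε' = (S + L E) ε`, and by the regulator equations the
tracking error `w = x - X₁ d - X₂ r` obeys `w' = (A + B K₁) w + B K₂ ε + B K₃ (η - r)`, while the
output error equals `(C + D K₁) w + D K₂ ε + D K₃ (η - r)`.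

For a Hurwitz matrix `M`, `‖exp (t M)‖ ≤ C e^{-α t}`: on the generalized eigenspace of an
eigenvalue `μ`, `exp (t M)` acts as `e^{μ t}` times a polynomial in `t`. Applying the mean value
inequality to `s ↦ exp ((T - s) M) y(s)` (Duhamel's formula) shows that a Hurwitz system driven by
an exponentially decaying input decays exponentially. Hence `ε`, then `w`, and finally the output
error decay exponentially.
-/

open NormedSpace Asymptotics Set Topology

def HasExpDecay {E : Type*} [Norm E] (f : ℝ → E) : Prop :=
  ∃ α > 0, f =O[𝓟 (Ici 0)] fun t => Real.exp (-α * t)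

lemma isBigO_exp_neg_mul_of_le {α β : ℝ} (h : β ≤ α) :
    (fun t => Real.exp (-α * t)) =O[𝓟 (Ici 0)] fun t => Real.exp (-β * t) :=
  IsBigO.of_bound 1 <| eventually_principal.2 fun t (ht : 0 ≤ t) => by
    simp only [Real.norm_eq_abs, Real.abs_exp, one_mul, Real.exp_le_exp]
    nlinarith

lemma hasExpDecay_pow_mul_exp (k : ℕ) {α : ℝ} (hα : 0 < α) :
    HasExpDecay fun t => t ^ k * Real.exp (-α * t) := by
  refine ⟨α / 2, by positivity, IsBigO.of_bound (k.factorial / (α / 2) ^ k) ?_⟩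
  refine eventually_principal.2 fun t (ht : 0 ≤ t) => ?_
  have hpow := Real.pow_div_factorial_le_exp (x := α / 2 * t) (by positivity) k
  rw [Real.norm_eq_abs, Real.norm_eq_abs, abs_of_nonneg (by positivity), Real.abs_exp]
  calc t ^ k * Real.exp (-α * t)
      = (α / 2 * t) ^ k / k.factorial * Real.exp (-(α / 2) * t)
          * (k.factorial / (α / 2) ^ k * Real.exp (-(α / 2) * t)) := by
        rw [mul_pow, mul_mul_mul_comm, ← Real.exp_add]
        field_simp
        ring_nf
    _ ≤ Real.exp (α / 2 * t) * Real.exp (-(α / 2) * t)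
          * (k.factorial / (α / 2) ^ k * Real.exp (-(α / 2) * t)) := by gcongr
    _ = k.factorial / (α / 2) ^ k * Real.exp (-(α / 2) * t) := by
        rw [← Real.exp_add, neg_mul, add_neg_cancel, Real.exp_zero, one_mul]

namespace HasExpDecay

variable {E F : Type*} [NormedAddCommGroup E] [NormedAddCommGroup F] {f g : ℝ → E}

lemma of_isBigO {h : ℝ → F} (hf : HasExpDecay f) (hhf : h =O[𝓟 (Ici 0)] f) :
    HasExpDecay h :=
  let ⟨α, hα, hfα⟩ := hf
  ⟨α, hα, hhf.trans hfα⟩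

lemma of_bound {α C : ℝ} (hα : 0 < α) (h : ∀ t ≥ 0, ‖f t‖ ≤ C * Real.exp (-α * t)) :
    HasExpDecay f :=
  ⟨α, hα, IsBigO.of_bound C <| eventually_principal.2 fun t ht => by
    simpa only [Real.norm_eq_abs, Real.abs_exp] using h t ht⟩

lemma exists_bound (hf : HasExpDecay f) :
    ∃ α > 0, ∃ C > 0, ∀ t ≥ 0, ‖f t‖ ≤ C * Real.exp (-α * t) := by
  obtain ⟨α, hα, hfα⟩ := hf
  obtain ⟨C, hC, hfC⟩ := hfα.exists_pos
  refine ⟨α, hα, C, hC, fun t ht => ?_⟩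
  simpa only [Real.norm_eq_abs, Real.abs_exp] using eventually_principal.1 hfC.bound t ht

lemma zero : HasExpDecay fun _ : ℝ => (0 : E) :=
  ⟨1, one_pos, isBigO_zero _ _⟩

lemma add (hf : HasExpDecay f) (hg : HasExpDecay g) : HasExpDecay fun t => f t + g t := by
  obtain ⟨α, hα, hfα⟩ := hf
  obtain ⟨β, hβ, hgβ⟩ := hg
  exact ⟨min α β, lt_min hα hβ, (hfα.trans (isBigO_exp_neg_mul_of_le (min_le_left α β))).add
    (hgβ.trans (isBigO_exp_neg_mul_of_le (min_le_right α β)))⟩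

lemma sum {ι : Type*} (s : Finset ι) {f : ι → ℝ → E} (hf : ∀ i ∈ s, HasExpDecay (f i)) :
    HasExpDecay fun t => ∑ i ∈ s, f i t := by
  classical
  induction s using Finset.induction_on with
  | empty => exact zero
  | insert i s hi ih =>
    simp_rw [Finset.sum_insert hi]
    exact (hf i (s.mem_insert_self i)).add (ih fun j hj => hf j (Finset.mem_insert_of_mem hj))

lemma smul_const [NormedSpace ℝ E] {c : ℝ → ℝ}
    (hc : HasExpDecay c) (x : E) : HasExpDecay fun t => c t • x :=
  hc.of_isBigO <| IsBigO.of_bound ‖x‖ <| Eventually.of_forall fun t => by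
    rw [norm_smul, mul_comm]

lemma tendsto_zero (hf : HasExpDecay f) : Tendsto f atTop (𝓝 0) := by
  obtain ⟨α, hα, hfα⟩ := hf
  refine (hfα.mono (le_principal_iff.2 (Ici_mem_atTop 0))).trans_tendsto ?_
  exact Real.tendsto_exp_atBot.comp (tendsto_id.const_mul_atTop_of_neg (neg_lt_zero.2 hα))

end HasExpDecay

section MatrixNorm

attribute [local instance] Matrix.linftyOpNormedAddCommGroup Matrix.linftyOpNormedRing
  Matrix.linftyOpNormedAlgebra Matrix.linftyOpNormedSpace

variable {ι κ : Type*} [Fintype ι] [Fintype κ]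

lemma HasExpDecay.const_mulVec {𝕜 : Type*} [NormedField 𝕜] (A : Matrix κ ι 𝕜) {y : ℝ → ι → 𝕜}
    (hy : HasExpDecay y) : HasExpDecay fun t => A *ᵥ y t :=
  hy.of_isBigO <| IsBigO.of_bound ‖A‖ <| Eventually.of_forall fun t =>
    linfty_opNorm_mulVec A (y t)

lemma HasExpDecay.mulVec_const {𝕜 : Type*} [NormedField 𝕜] {A : ℝ → Matrix κ ι 𝕜}
    (hA : HasExpDecay A) (v : ι → 𝕜) : HasExpDecay fun t => A t *ᵥ v :=
  hA.of_isBigO <| IsBigO.of_bound ‖v‖ <| Eventually.of_forall fun t =>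
    (linfty_opNorm_mulVec (A t) v).trans_eq (mul_comm _ _)

lemma HasDerivAt.matrix_mulVec {A : ℝ → Matrix κ ι ℝ} {A' : Matrix κ ι ℝ} {y : ℝ → ι → ℝ}
    {y' : ι → ℝ} {t : ℝ} (hA : HasDerivAt A A' t) (hy : HasDerivAt y y' t) :
    HasDerivAt (fun s => A s *ᵥ y s) (A' *ᵥ y t + A t *ᵥ y') t := by
  let Φ : Matrix κ ι ℝ →L[ℝ] (ι → ℝ) →L[ℝ] κ → ℝ :=
    LinearMap.toContinuousLinearMap
      (LinearMap.toContinuousLinearMap.toLinearMap ∘ₗ mulVecBilin ℝ ℝ)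
  exact (Φ.hasFDerivAt.comp_hasDerivAt t hA).clm_apply hy

lemma HasDerivAt.const_mulVec (A : Matrix κ ι ℝ) {y : ℝ → ι → ℝ} {y' : ι → ℝ} {t : ℝ}
    (hy : HasDerivAt y y' t) : HasDerivAt (fun s => A *ᵥ y s) (A *ᵥ y') t := by
  simpa using (hasDerivAt_const t A).matrix_mulVec hy

variable [DecidableEq ι]

lemma HasExpDecay.of_entries [DecidableEq κ] {A : ℝ → Matrix ι κ ℝ}
    (h : ∀ i j, HasExpDecay fun t => A t i j) : HasExpDecay A := by
  have hA : A = fun t => ∑ i, ∑ j, A t i j • Matrix.single i j (1 : ℝ) := by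
    ext t : 1
    simpa [smul_single] using matrix_eq_sum_single (A t)
  rw [hA]
  exact HasExpDecay.sum _ fun i _ => HasExpDecay.sum _ fun j _ => (h i j).smul_const _

lemma HasExpDecay.of_hasDerivAt_mulVec_add {M : Matrix ι ι ℝ}
    (hM : HasExpDecay fun t => exp (t • M)) {y g : ℝ → ι → ℝ} (hg : HasExpDecay g)
    (hy : ∀ t, HasDerivAt y (M *ᵥ y t + g t) t) : HasExpDecay y := by
  obtain ⟨α, hα, CM, hCM, hMb⟩ := hM.exists_bound
  obtain ⟨β, hβ, Cg, hCg, hgb⟩ := hg.exists_bound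
  set γ := min α β
  have hduhamel : ∀ T ≥ 0, ‖y T - exp (T • M) *ᵥ y 0‖ ≤ CM * Cg * (T * Real.exp (-γ * T)) := by
    intro T hT
    have hderiv : ∀ s, HasDerivAt (fun s => exp ((T - s) • M) *ᵥ y s)
        (exp ((T - s) • M) *ᵥ g s) s := by
      intro s
      have hexp := (hasDerivAt_exp_smul_const M (T - s)).scomp s ((hasDerivAt_id s).const_sub T)
      refine (hexp.matrix_mulVec (hy s)).congr_deriv ?_
      simp only [Function.comp_apply, neg_smul, one_smul, neg_mulVec, ← mulVec_mulVec, mulVec_add]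
      abel
    have hbound : ∀ s ∈ Ico 0 T, ‖exp ((T - s) • M) *ᵥ g s‖ ≤ CM * Cg * Real.exp (-γ * T) := by
      rintro s ⟨hs0, hsT⟩
      have hM' := hMb (T - s) (sub_nonneg.2 hsT.le)
      calc ‖exp ((T - s) • M) *ᵥ g s‖ ≤ ‖exp ((T - s) • M)‖ * ‖g s‖ := linfty_opNorm_mulVec _ _
        _ ≤ CM * Real.exp (-α * (T - s)) * (Cg * Real.exp (-β * s)) :=
          mul_le_mul hM' (hgb s hs0) (norm_nonneg _) ((norm_nonneg _).trans hM')
        _ = CM * Cg * Real.exp (-α * (T - s) + -β * s) := by rw [Real.exp_add]; ring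
        _ ≤ CM * Cg * Real.exp (-γ * T) := by
          gcongr
          nlinarith [min_le_left α β, min_le_right α β]
    have := norm_image_sub_le_of_norm_deriv_le_segment'
      (fun s _ => (hderiv s).hasDerivWithinAt) hbound T (right_mem_Icc.2 hT)
    simpa [mul_comm T, mul_assoc] using this
  have hrest : HasExpDecay fun T => y T - exp (T • M) *ᵥ y 0 :=
    (hasExpDecay_pow_mul_exp 1 (lt_min hα hβ)).of_isBigO <| IsBigO.of_bound (CM * Cg) <|
      eventually_principal.2 fun T (hT : 0 ≤ T) => by
        rw [Real.norm_eq_abs, pow_one, abs_of_nonneg (by positivity)]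
        exact hduhamel T hT
  simpa using (hM.mulVec_const (y 0)).add hrest

lemma exp_mulVec_eq_sum_of_pow_mulVec_eq_zero {𝕂 : Type*} [RCLike 𝕂] {N : Matrix ι ι 𝕂}
    {v : ι → 𝕂} {K : ℕ} (hv : N ^ K *ᵥ v = 0) :
    exp N *ᵥ v = ∑ j ∈ Finset.range K, (j.factorial⁻¹ : 𝕂) • (N ^ j *ᵥ v) := by
  let evalAt : Matrix ι ι 𝕂 →+ (ι → 𝕂) := ((mulVecBilin 𝕂 𝕂).flip v).toAddMonoidHom
  have hsum := (exp_series_hasSum_exp' (𝕂 := 𝕂) N).map evalAt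
    (continuous_id.matrix_mulVec continuous_const)
  have hfin : ∀ j ∉ Finset.range K, evalAt ((j.factorial⁻¹ : 𝕂) • N ^ j) = 0 := by
    intro j hj
    obtain ⟨i, rfl⟩ := Nat.exists_eq_add_of_le' (not_lt.1 (Finset.mem_range.not.1 hj))
    simp [evalAt, pow_add, hv]
  refine (hsum.unique (hasSum_sum_of_ne_finset_zero hfin)).trans ?_
  simp [evalAt]

lemma exp_smul_one (c : ℂ) : exp (c • (1 : Matrix ι ι ℂ)) = Complex.exp c • 1 := by
  rw [smul_one_eq_diagonal, exp_diagonal, Pi.exp_def, ← Complex.exp_eq_exp_ℂ,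
    smul_one_eq_diagonal]

lemma exp_smul_mulVec_eq_sum {A : Matrix ι ι ℂ} {μ : ℂ} {K : ℕ} {v : ι → ℂ}
    (hv : (A - μ • 1) ^ K *ᵥ v = 0) (t : ℂ) :
    exp (t • A) *ᵥ v = ∑ j ∈ Finset.range K,
      (t ^ j * Complex.exp (t * μ)) • ((j.factorial⁻¹ : ℂ) • ((A - μ • 1) ^ j *ᵥ v)) := by
  set N := A - μ • 1
  have hcomm : Commute ((t * μ) • (1 : Matrix ι ι ℂ)) (t • N) := (Commute.one_left _).smul_left _
  have hA : t • A = (t * μ) • (1 : Matrix ι ι ℂ) + t • N := by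
    simp only [N, smul_sub, smul_smul]; abel
  have htN : (t • N) ^ K *ᵥ v = 0 := by rw [smul_pow, smul_mulVec, hv, smul_zero]
  rw [hA, Matrix.exp_add_of_commute _ _ hcomm, exp_smul_one, smul_one_mul, smul_mulVec,
    exp_mulVec_eq_sum_of_pow_mulVec_eq_zero htN, Finset.smul_sum]
  refine Finset.sum_congr rfl fun j _ => ?_
  simp only [smul_pow, smul_mulVec, smul_smul]
  ring_nf

lemma hasExpDecay_exp_smul_mulVec_of_pow_mulVec_eq_zero {A : Matrix ι ι ℂ} {μ : ℂ}
    (hμ : μ.re < 0) {K : ℕ} {v : ι → ℂ} (hv : (A - μ • 1) ^ K *ᵥ v = 0) :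
    HasExpDecay fun t : ℝ => exp ((t : ℂ) • A) *ᵥ v := by
  simp_rw [exp_smul_mulVec_eq_sum hv]
  refine HasExpDecay.sum _ fun j _ => ?_
  refine (hasExpDecay_pow_mul_exp j (neg_pos.2 hμ)).of_isBigO <|
    IsBigO.of_bound ‖(j.factorial⁻¹ : ℂ) • ((A - μ • 1) ^ j *ᵥ v)‖ <|
      eventually_principal.2 fun t (ht : 0 ≤ t) => ?_
  have hnorm : ‖(t : ℂ) ^ j * Complex.exp (t * μ)‖ = ‖t ^ j * Real.exp (-(-μ.re) * t)‖ := by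
    simp [Complex.norm_exp, abs_of_nonneg ht, mul_comm]
  rw [norm_smul, hnorm, mul_comm]

lemma hasExpDecay_exp_smul_mulVec {A : Matrix ι ι ℂ} (hA : ∀ μ ∈ spectrum ℂ A, μ.re < 0)
    (w : ι → ℂ) : HasExpDecay fun t : ℝ => exp ((t : ℂ) • A) *ᵥ w := by
  have hw : w ∈ ⨆ μ, Module.End.maxGenEigenspace (toLin' A) μ := by
    rw [Module.End.iSup_maxGenEigenspace_eq_top]; trivial
  induction hw using Submodule.iSup_induction' with
  | mem μ v hv =>
    obtain ⟨K, hK⟩ := (Module.End.mem_maxGenEigenspace _ _ _).1 hv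
    by_cases hv0 : v = 0
    · simp only [hv0, mulVec_zero]
      exact HasExpDecay.zero
    have hμ : μ ∈ spectrum ℂ A := by
      rw [← spectrum_toLin']
      exact (Module.End.hasEigenvalue_of_hasGenEigenvalue (k := K)
        ((Submodule.ne_bot_iff _).2 ⟨v, Module.End.mem_genEigenspace_nat.2 hK, hv0⟩)).mem_spectrum
    refine hasExpDecay_exp_smul_mulVec_of_pow_mulVec_eq_zero (hA μ hμ) (K := K) ?_
    rwa [← toLin'_apply, toLin'_pow, map_sub, map_smul, toLin'_one,
      ← Module.End.one_eq_id]
  | zero =>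
    simp only [mulVec_zero]
    exact HasExpDecay.zero
  | add v w _ _ hv hw => simpa [mulVec_add] using hv.add hw

lemma map_ofReal_exp_smul (M : Matrix ι ι ℝ) (t : ℝ) :
    (exp (t • M)).map Complex.ofReal = exp ((t : ℂ) • M.map Complex.ofReal) := by
  have hcont : Continuous (Complex.ofRealHom.mapMatrix : Matrix ι ι ℝ →+* Matrix ι ι ℂ) :=
    continuous_id.matrix_map Complex.continuous_ofReal
  refine (map_exp _ hcont _).trans (congrArg exp ?_)
  ext i j
  simp

lemma IsHurwitz.hasExpDecay_exp_smul {M : Matrix ι ι ℝ} (hM : IsHurwitz M) :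
    HasExpDecay fun t : ℝ => exp (t • M) := by
  refine HasExpDecay.of_entries fun i j => ?_
  refine (hasExpDecay_exp_smul_mulVec hM (Pi.single j 1)).of_isBigO <| IsBigO.of_bound 1 <|
    Eventually.of_forall fun t => ?_
  rw [one_mul, ← Complex.norm_real, mulVec_single_one, ← map_ofReal_exp_smul]
  exact norm_le_pi_norm (fun i => (exp (t • M) i j : ℂ)) i

lemma IsHurwitz.hasExpDecay_of_hasDerivAt {M : Matrix ι ι ℝ} (hM : IsHurwitz M)
    {y g : ℝ → ι → ℝ} (hg : HasExpDecay g) (hy : ∀ t, HasDerivAt y (M *ᵥ y t + g t) t) :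
    HasExpDecay y :=
  hM.hasExpDecay_exp_smul.of_hasDerivAt_mulVec_add hg hy

end MatrixNorm

section Regulator

variable {n m q n₀ l : Type*} [Fintype n] [Fintype m] [Fintype q] [Fintype n₀]
  (A : Matrix n n ℝ) (B : Matrix n m ℝ) (E : Matrix n q ℝ) (S : Matrix q q ℝ)
  (L : Matrix q n ℝ) {x : ℝ → n → ℝ} {d ζ : ℝ → q → ℝ} {u : ℝ → m → ℝ} {t : ℝ}

lemma hasDerivAt_observer_error (hd : HasDerivAt d (S *ᵥ d t) t)
    (hx : HasDerivAt x (A *ᵥ x t + B *ᵥ u t + E *ᵥ d t) t)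
    (hζ : HasDerivAt ζ ((S + L * E) *ᵥ ζ t + (L * A - S * L - L * E * L) *ᵥ x t
      + (L * B) *ᵥ u t) t) :
    HasDerivAt (fun s => ζ s - L *ᵥ x s - d s)
      ((S + L * E) *ᵥ (ζ t - L *ᵥ x t - d t)) t := by
  refine ((hζ.sub (hx.const_mulVec L)).sub hd).congr_deriv ?_
  simp only [mulVec_sub, mulVec_add, add_mulVec, sub_mulVec,
    ← mulVec_mulVec]
  abel

lemma hasDerivAt_tracking_error {S₀ : Matrix n₀ n₀ ℝ} {X₁ : Matrix n q ℝ} {U₁ : Matrix m q ℝ}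
    {X₂ : Matrix n n₀ ℝ} {U₂ : Matrix m n₀ ℝ} (hreg₁ : X₁ * S = A * X₁ + B * U₁ + E)
    (hreg₂ : X₂ * S₀ = A * X₂ + B * U₂) (K₁ : Matrix m n ℝ) {r η : ℝ → n₀ → ℝ}
    (hd : HasDerivAt d (S *ᵥ d t) t) (hr : HasDerivAt r (S₀ *ᵥ r t) t)
    (hx : HasDerivAt x (A *ᵥ x t + B *ᵥ u t + E *ᵥ d t) t)
    (hu : u t = K₁ *ᵥ x t + (U₁ - K₁ * X₁) *ᵥ (ζ t - L *ᵥ x t) + (U₂ - K₁ * X₂) *ᵥ η t) :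
    HasDerivAt (fun s => x s - X₁ *ᵥ d s - X₂ *ᵥ r s)
      ((A + B * K₁) *ᵥ (x t - X₁ *ᵥ d t - X₂ *ᵥ r t) +
        ((B * (U₁ - K₁ * X₁)) *ᵥ (ζ t - L *ᵥ x t - d t)
          + (B * (U₂ - K₁ * X₂)) *ᵥ (η t - r t))) t := by
  refine ((hx.sub (hd.const_mulVec X₁)).sub (hr.const_mulVec X₂)).congr_deriv ?_
  have hE : E = X₁ * S - A * X₁ - B * U₁ := by rw [hreg₁]; abel
  rw [hu, mulVec_mulVec, mulVec_mulVec, hreg₂, hE]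
  simp only [mulVec_sub, mulVec_add, add_mulVec, sub_mulVec,
    ← mulVec_mulVec]
  abel

lemma output_error_eq (C : Matrix l n ℝ) (D : Matrix l m ℝ) (F₀ : Matrix l n₀ ℝ)
    {X₁ : Matrix n q ℝ} {U₁ : Matrix m q ℝ} {X₂ : Matrix n n₀ ℝ} {U₂ : Matrix m n₀ ℝ}
    (hreg₁ : C * X₁ + D * U₁ = 0) (hreg₂ : C * X₂ + D * U₂ = F₀) (K₁ : Matrix m n ℝ)
    (L : Matrix q n ℝ) {x : n → ℝ} {d ζ : q → ℝ} {r η : n₀ → ℝ} {u : m → ℝ}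
    (hu : u = K₁ *ᵥ x + (U₁ - K₁ * X₁) *ᵥ (ζ - L *ᵥ x) + (U₂ - K₁ * X₂) *ᵥ η) :
    C *ᵥ x + D *ᵥ u - F₀ *ᵥ r = (C + D * K₁) *ᵥ (x - X₁ *ᵥ d - X₂ *ᵥ r)
      + (D * (U₁ - K₁ * X₁)) *ᵥ (ζ - L *ᵥ x - d) + (D * (U₂ - K₁ * X₂)) *ᵥ (η - r) := by
  have hF₀ : F₀ *ᵥ r = (C * X₂ + D * U₂) *ᵥ r := by rw [hreg₂]
  have hd : (C * X₁ + D * U₁) *ᵥ d = 0 := by rw [hreg₁, zero_mulVec]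
  rw [hu, hF₀, ← sub_zero (_ - _), ← hd]
  simp only [mulVec_sub, mulVec_add, add_mulVec, sub_mulVec, ← mulVec_mulVec]
  abel

end Regulator

theorem stmt13_general {n m l q n₀ : ℕ}
    (A : Matrix (Fin n) (Fin n) ℝ) (B : Matrix (Fin n) (Fin m) ℝ)
    (C : Matrix (Fin l) (Fin n) ℝ) (D : Matrix (Fin l) (Fin m) ℝ)
    (E : Matrix (Fin n) (Fin q) ℝ) (S : Matrix (Fin q) (Fin q) ℝ)
    (S₀ : Matrix (Fin n₀) (Fin n₀) ℝ) (F₀ : Matrix (Fin l) (Fin n₀) ℝ)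
    (X₁ : Matrix (Fin n) (Fin q) ℝ) (U₁ : Matrix (Fin m) (Fin q) ℝ)
    (hreg11 : X₁ * S = A * X₁ + B * U₁ + E)
    (hreg12 : C * X₁ + D * U₁ = 0)
    (X₂ : Matrix (Fin n) (Fin n₀) ℝ) (U₂ : Matrix (Fin m) (Fin n₀) ℝ)
    (hreg21 : X₂ * S₀ = A * X₂ + B * U₂)
    (hreg22 : C * X₂ + D * U₂ = F₀)
    (K₁ : Matrix (Fin m) (Fin n) ℝ) (hK₁ : IsHurwitz (A + B * K₁))
    (K₂ : Matrix (Fin m) (Fin q) ℝ) (hK₂ : K₂ = U₁ - K₁ * X₁)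
    (K₃ : Matrix (Fin m) (Fin n₀) ℝ) (hK₃ : K₃ = U₂ - K₁ * X₂)
    (L : Matrix (Fin q) (Fin n) ℝ) (hL : IsHurwitz (S + L * E))
    (x : ℝ → Fin n → ℝ) (d : ℝ → Fin q → ℝ) (r : ℝ → Fin n₀ → ℝ)
    (ζ : ℝ → Fin q → ℝ) (u : ℝ → Fin m → ℝ)
    (η : ℝ → Fin n₀ → ℝ) (c lam : ℝ) (hlam : 0 < lam)
    (hη : ∀ t ≥ (0:ℝ), ‖η t - r t‖ ≤ c * Real.exp (-lam * t))
    (hd : ∀ t, HasDerivAt d (S.mulVec (d t)) t)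
    (hr : ∀ t, HasDerivAt r (S₀.mulVec (r t)) t)
    (hx : ∀ t, HasDerivAt x (A.mulVec (x t) + B.mulVec (u t) + E.mulVec (d t)) t)
    (hζ : ∀ t, HasDerivAt ζ
      ((S + L * E).mulVec (ζ t) + (L * A - S * L - L * E * L).mulVec (x t)
        + (L * B).mulVec (u t)) t)
    (hu : ∀ t, u t = K₁.mulVec (x t) + K₂.mulVec (ζ t - L.mulVec (x t)) + K₃.mulVec (η t)) :
    Tendsto (fun t => C.mulVec (x t) + D.mulVec (u t) - F₀.mulVec (r t)) atTop (nhds 0) := by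
  subst hK₂ hK₃
  have hobserver : HasExpDecay fun t => ζ t - L *ᵥ x t - d t :=
    hL.hasExpDecay_of_hasDerivAt HasExpDecay.zero fun t =>
      (hasDerivAt_observer_error A B E S L (hd t) (hx t) (hζ t)).congr_deriv (add_zero _).symm
  have hreference : HasExpDecay fun t => η t - r t := HasExpDecay.of_bound hlam hη
  have htracking : HasExpDecay fun t => x t - X₁ *ᵥ d t - X₂ *ᵥ r t :=
    hK₁.hasExpDecay_of_hasDerivAt
      ((hobserver.const_mulVec _).add (hreference.const_mulVec _)) fun t =>
      hasDerivAt_tracking_error A B E S L hreg11 hreg21 K₁ (hd t) (hr t) (hx t) (hu t)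
  have herror := ((htracking.const_mulVec (C + D * K₁)).add
    (hobserver.const_mulVec (D * (U₁ - K₁ * X₁)))).add
    (hreference.const_mulVec (D * (U₂ - K₁ * X₂)))
  convert herror.tendsto_zero using 2 with t
  exact output_error_eq C D F₀ hreg12 hreg22 K₁ L (hu t)

theorem stmt13 {n m l q n₀ : ℕ}
    (A : Matrix (Fin n) (Fin n) ℝ) (B : Matrix (Fin n) (Fin m) ℝ)
    (C : Matrix (Fin l) (Fin n) ℝ) (D : Matrix (Fin l) (Fin m) ℝ)
    (E : Matrix (Fin n) (Fin q) ℝ) (S : Matrix (Fin q) (Fin q) ℝ)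
    (S₀ : Matrix (Fin n₀) (Fin n₀) ℝ) (F₀ : Matrix (Fin l) (Fin n₀) ℝ)
    (X₁ : Matrix (Fin n) (Fin q) ℝ) (U₁ : Matrix (Fin m) (Fin q) ℝ)
    (hreg11 : X₁ * S = A * X₁ + B * U₁ + E)
    (hreg12 : C * X₁ + D * U₁ = 0)
    (X₂ : Matrix (Fin n) (Fin n₀) ℝ) (U₂ : Matrix (Fin m) (Fin n₀) ℝ)
    (hreg21 : X₂ * S₀ = A * X₂ + B * U₂)
    (hreg22 : C * X₂ + D * U₂ = F₀)
    (K₁ : Matrix (Fin m) (Fin n) ℝ) (hK₁ : IsHurwitz (A + B * K₁))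
    (K₂ : Matrix (Fin m) (Fin q) ℝ) (hK₂ : K₂ = U₁ - K₁ * X₁)
    (K₃ : Matrix (Fin m) (Fin n₀) ℝ) (hK₃ : K₃ = U₂ - K₁ * X₂)
    (L : Matrix (Fin q) (Fin n) ℝ) (hL : IsHurwitz (S + L * E))
    (x : ℝ → Fin n → ℝ) (d : ℝ → Fin q → ℝ) (r : ℝ → Fin n₀ → ℝ)
    (ζ : ℝ → Fin q → ℝ) (u : ℝ → Fin m → ℝ)
    (η : ℝ → Fin n₀ → ℝ) (c lam : ℝ) (hc : 0 < c) (hlam : 0 < lam)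
    (hη : ∀ t ≥ (0:ℝ), ‖η t - r t‖ ≤ c * Real.exp (-lam * t))
    (hd : ∀ t, HasDerivAt d (S.mulVec (d t)) t)
    (hr : ∀ t, HasDerivAt r (S₀.mulVec (r t)) t)
    (hx : ∀ t, HasDerivAt x (A.mulVec (x t) + B.mulVec (u t) + E.mulVec (d t)) t)
    (hζ : ∀ t, HasDerivAt ζ
      ((S + L * E).mulVec (ζ t) + (L * A - S * L - L * E * L).mulVec (x t)
        + (L * B).mulVec (u t)) t)
    (hu : ∀ t, u t = K₁.mulVec (x t) + K₂.mulVec (ζ t - L.mulVec (x t)) + K₃.mulVec (η t)) :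
    Tendsto (fun t => C.mulVec (x t) + D.mulVec (u t) - F₀.mulVec (r t)) atTop (nhds 0) :=
  stmt13_general A B C D E S S₀ F₀ X₁ U₁ hreg11 hreg12 X₂ U₂ hreg21 hreg22 K₁ hK₁ K₂ hK₂ K₃ hK₃ L hL
    x d r ζ u η c lam hlam hη hd hr hx hζ hu
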